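/- Let C_oV, C_oT, C_α, C_Ω, N₀, C_p, C_kλ, C_λ be positive real numbers and let f, g, q, t be nonnegative real numbers satisfying the smallness condition C_Ω C_α C_oV⁻¹ C_oT⁻¹ N₀ g t ≤ 1/2. Define Ĉ_fgQ = 2 C_oV⁻¹ C_α (f + C_p C_oT⁻¹ g q), Ĉ_u = 2 C_Ω C_α C_oV⁻¹ C_oT⁻¹ g (C_kλ + C_λ C_oT), and Ĉ_θ = C_Ω C_oT⁻¹ (2(C_kλ + C_λ C_oT) + N₀ Ĉ_fgQ). Suppose nonnegative real numbers V̂ and T̂ satisfy V̂ ≤ Ĉ_fgQ + Ĉ_u t and T̂ ≤ C_p C_oT⁻¹ q + Ĉ_θ t, and define V = C_oV⁻¹ C_α (f + g T̂) and T = C_oT⁻¹ [C_p q + C_Ω (C_kλ + C_λ C_oT + N₀ V̂) t]. Then V ≤ Ĉ_fgQ + Ĉ_u t and T ≤ C_p C_oT⁻¹ q + Ĉ_θ t. -/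
import Mathlib


/-- Arithmetic core of Lemma (selfcont): the decoupled solution map sends the ball
`{V̂ ≤ Ĉ_fgQ + Ĉ_u t, T̂ ≤ C_p C_oT⁻¹ q + Ĉ_θ t}` into itself. -/
theorem stmt_9 (CoV CoT Cα CΩ N0 Cp Ckl Cl : ℝ)
    (hCoV : 0 < CoV) (hCoT : 0 < CoT) (hCα : 0 < Cα) (hCΩ : 0 < CΩ)
    (hN0 : 0 < N0) (hCp : 0 < Cp) (hCkl : 0 < Ckl) (hCl : 0 < Cl)
    (f g q t : ℝ) (hf : 0 ≤ f) (hg : 0 ≤ g) (hq : 0 ≤ q) (ht : 0 ≤ t)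
    (hsmall : CΩ * Cα * CoV⁻¹ * CoT⁻¹ * N0 * g * t ≤ 1 / 2)
    (CfgQ Cu Cth : ℝ)
    (hCfgQ : CfgQ = 2 * CoV⁻¹ * Cα * (f + Cp * CoT⁻¹ * g * q))
    (hCu : Cu = 2 * CΩ * Cα * CoV⁻¹ * CoT⁻¹ * g * (Ckl + Cl * CoT))
    (hCth : Cth = CΩ * CoT⁻¹ * (2 * (Ckl + Cl * CoT) + N0 * CfgQ))
    (Vhat That : ℝ) (hVhat0 : 0 ≤ Vhat) (hThat0 : 0 ≤ That)
    (hVhat : Vhat ≤ CfgQ + Cu * t)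
    (hThat : That ≤ Cp * CoT⁻¹ * q + Cth * t)
    (V T : ℝ)
    (hV : V = CoV⁻¹ * Cα * (f + g * That))
    (hT : T = CoT⁻¹ * (Cp * q + CΩ * (Ckl + Cl * CoT + N0 * Vhat) * t)) :
    V ≤ CfgQ + Cu * t ∧ T ≤ Cp * CoT⁻¹ * q + Cth * t := by
  have hCoV' : (0:ℝ) < CoV⁻¹ := inv_pos.mpr hCoV
  have hCoT' : (0:ℝ) < CoT⁻¹ := inv_pos.mpr hCoT
  have hCfgQ0 : 0 ≤ CfgQ := by rw [hCfgQ]; positivity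
  have hK : (0:ℝ) < Ckl + Cl * CoT := by positivity
  have h2 : (CΩ * Cα * CoV⁻¹ * CoT⁻¹ * N0 * g * t) * (Ckl + Cl * CoT)
      ≤ (1/2) * (Ckl + Cl * CoT) := mul_le_mul_of_nonneg_right hsmall hK.le
  have hCut : N0 * (Cu * t) = 2 * ((CΩ * Cα * CoV⁻¹ * CoT⁻¹ * N0 * g * t) * (Ckl + Cl * CoT)) := by
    rw [hCu]; ring
  have key : N0 * Vhat ≤ N0 * CfgQ + (Ckl + Cl * CoT) := by
    have h1 : N0 * Vhat ≤ N0 * (CfgQ + Cu * t) :=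
      mul_le_mul_of_nonneg_left hVhat hN0.le
    rw [mul_add, hCut] at h1
    linarith
  constructor
  · rw [hV]
    have h3 : (CoV⁻¹ * Cα * g) * That ≤ (CoV⁻¹ * Cα * g) * (Cp * CoT⁻¹ * q + Cth * t) :=
      mul_le_mul_of_nonneg_left hThat (by positivity)
    have h4 : (CΩ * Cα * CoV⁻¹ * CoT⁻¹ * N0 * g * t) * CfgQ ≤ (1/2) * CfgQ :=
      mul_le_mul_of_nonneg_right hsmall hCfgQ0
    have hid : (CoV⁻¹ * Cα * g) * (Cp * CoT⁻¹ * q + Cth * t)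
        = CoV⁻¹ * Cα * (g * (Cp * CoT⁻¹ * q)) + Cu * t
          + (CΩ * Cα * CoV⁻¹ * CoT⁻¹ * N0 * g * t) * CfgQ := by
      rw [hCth, hCu]; ring
    have hfg : CoV⁻¹ * Cα * (f + g * (Cp * CoT⁻¹ * q)) = (1/2) * CfgQ := by
      rw [hCfgQ]; ring
    nlinarith [h3, h4, hid, hfg]
  · have hA : Ckl + Cl * CoT + N0 * Vhat ≤ 2 * (Ckl + Cl * CoT) + N0 * CfgQ := by
      linarith
    have h5 : (CoT⁻¹ * CΩ * t) * (Ckl + Cl * CoT + N0 * Vhat)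
        ≤ (CoT⁻¹ * CΩ * t) * (2 * (Ckl + Cl * CoT) + N0 * CfgQ) :=
      mul_le_mul_of_nonneg_left hA (by positivity)
    rw [hT, hCth]
    linarith [h5]
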